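/- For partitions λ, μ, the Nekrasov factor satisfies N_{λ,μ}(1) ≠ 0 if and only if λ = μ. (Assume q is not a root of unity.) -/

import Mathlib

open Finset

noncomputable section

/-- The `i`-th part (0-indexed) of a partition given as a list of parts. -/
def part (l : List ℕ) (i : ℕ) : ℕ := l.getD i 0

/-- The `j`-th column length (0-indexed), i.e. λ'_{j+1} = #{i : λ_i ≥ j+1}. -/
def conjPart (l : List ℕ) (j : ℕ) : ℕ := (l.filter (fun p => j < p)).length

/-- A list of naturals represents a partition: weakly decreasing with positive parts. -/
def IsPartition (l : List ℕ) : Prop := l.Pairwise (· ≥ ·) ∧ ∀ p ∈ l, 0 < p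

/-- The Nekrasov factor N_{λ,μ}(u) =
  ∏_{(i,j)∈λ}(1 - q^{-ℓ_λ(i,j)-a_μ(i,j)-1} u) · ∏_{(i,j)∈μ}(1 - q^{ℓ_μ(i,j)+a_λ(i,j)+1} u),
  with cells 0-indexed: arm a_μ(i,j) = μ_{i+1} - (j+1), leg ℓ_λ(i,j) = λ'_{j+1} - (i+1). -/
def nek (q u : ℂ) (lam mu : List ℕ) : ℂ :=
  (∏ i ∈ Finset.range lam.length, ∏ j ∈ Finset.range (part lam i),
    (1 - q ^ (-((conjPart lam j : ℤ) - ((i : ℤ) + 1)) - ((part mu i : ℤ) - ((j : ℤ) + 1)) - 1) * u)) *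
  (∏ i ∈ Finset.range mu.length, ∏ j ∈ Finset.range (part mu i),
    (1 - q ^ (((conjPart mu j : ℤ) - ((i : ℤ) + 1)) + ((part lam i : ℤ) - ((j : ℤ) + 1)) + 1) * u))

/-- λ̄ : all parts decreased by 1, zero parts dropped. -/
def bar (l : List ℕ) : List ℕ := (l.map (fun p => p - 1)).filter (fun p => 0 < p)

/-- r_n(λ) = (λ_1+1, …, λ_n+1, λ_{n+2}, λ_{n+3}, …). -/
def rn (n : ℕ) (l : List ℕ) : List ℕ :=
  ((List.range n).map (fun i => part l i + 1)) ++ l.drop (n + 1)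

/-- The conjugate (transposed) partition as a list. -/
def conjList (l : List ℕ) : List ℕ :=
  (List.range (part l 0)).map (fun j => conjPart l j)

end

/-! On the diagonal every factor of `N_{λ,λ}(1)` is `1 - q^{∓h}` with `h = ℓ_λ + a_λ + 1 ≥ 1` a hook
length, hence nonzero. If `λ ≠ μ`, say `μ_i < λ_i` with `i` the last such row, then the cell
`(i, μ_i)` of `λ` has `ℓ_λ = 0` (row `i + 1` of `λ` is at most `μ_{i+1} ≤ μ_i` long) and `a_μ = -1`,
so its factor in the first product is `1 - q^0 = 0`; the case `λ_i < μ_i` is symmetric. -/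

section Partitions

variable {l : List ℕ}

lemma part_eq_zero_of_length_le {i : ℕ} (h : l.length ≤ i) : part l i = 0 :=
  List.getD_eq_default _ _ h

lemma lt_length_of_part_ne_zero {i : ℕ} (h : part l i ≠ 0) : i < l.length := by
  by_contra hi
  exact h (part_eq_zero_of_length_le (not_lt.mp hi))

lemma part_mem_of_lt_length {i : ℕ} (hi : i < l.length) : part l i ∈ l := by
  simpa only [part, List.getD_eq_getElem _ _ hi] using List.getElem_mem hi

lemma part_le_of_pairwise_cons {a : ℕ} {t : List ℕ} (h : (a :: t).Pairwise (· ≥ ·)) (k : ℕ) :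
    part t k ≤ a := by
  by_cases hk : k < t.length
  · exact List.rel_of_pairwise_cons h (part_mem_of_lt_length hk)
  · simp [part_eq_zero_of_length_le (not_lt.mp hk)]

lemma part_pos_iff (hl : ∀ p ∈ l, 0 < p) {i : ℕ} : 0 < part l i ↔ i < l.length :=
  ⟨fun h => lt_length_of_part_ne_zero h.ne', fun hi => hl _ (part_mem_of_lt_length hi)⟩

lemma conjPart_cons (a : ℕ) (t : List ℕ) (j : ℕ) :
    conjPart (a :: t) j = if j < a then conjPart t j + 1 else conjPart t j := by
  by_cases h : j < a <;> simp [conjPart, h]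

lemma lt_conjPart_iff (hl : l.Pairwise (· ≥ ·)) {i j : ℕ} : i < conjPart l j ↔ j < part l i := by
  induction l generalizing i with
  | nil => simp [part, conjPart]
  | cons a t ih =>
    have ht := (List.pairwise_cons.mp hl).2
    have hta := part_le_of_pairwise_cons hl
    by_cases hja : j < a
    · cases i with
      | zero => simp [conjPart_cons, hja, part]
      | succ k => simp only [conjPart_cons, hja, if_true, add_lt_add_iff_right]; exact ih ht
    · have hconj : conjPart t j = 0 := by
        by_contra hne
        exact hja ((ih ht (i := 0)).mp (Nat.pos_of_ne_zero hne) |>.trans_le (hta 0))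
      cases i with
      | zero => simp [conjPart_cons, hja, hconj, part]
      | succ k =>
        simp only [conjPart_cons, hja, if_false, hconj]
        exact iff_of_false (by omega) (fun h => hja (h.trans_le (hta k)))

lemma part_antitone (hl : l.Pairwise (· ≥ ·)) : Antitone (part l) := by
  intro k i hki
  refine le_of_forall_lt fun j hj => ?_
  exact (lt_conjPart_iff hl).mp (hki.trans_lt ((lt_conjPart_iff hl).mpr hj))

lemma eq_of_part_eq {m : List ℕ} (hl : IsPartition l) (hm : IsPartition m)
    (h : ∀ i, part l i = part m i) : l = m := by
  have hlen : l.length = m.length := eq_of_forall_lt_iff fun i => by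
    rw [← part_pos_iff hl.2, ← part_pos_iff hm.2, h]
  refine List.ext_getElem hlen fun i hil him => ?_
  simpa only [part, List.getD_eq_getElem _ _ hil, List.getD_eq_getElem _ _ him] using h i

end Partitions

/-- The witness is `i` the last row with `μ_i < λ_i` and `j = μ_i`. -/
lemma exists_cell_conjPart_eq_succ_of_part_lt {lam mu : List ℕ} (hlam : lam.Pairwise (· ≥ ·))
    (hmu : mu.Pairwise (· ≥ ·)) {i₀ : ℕ} (hi₀ : part mu i₀ < part lam i₀) :
    ∃ i < lam.length, ∃ j < part lam i, conjPart lam j = i + 1 ∧ part mu i = j := by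
  set P : ℕ → Prop := fun i => part mu i < part lam i
  set i := Nat.findGreatest P lam.length
  have hPi : P i := Nat.findGreatest_spec (lt_length_of_part_ne_zero (by omega)).le hi₀
  have hi : i < lam.length := lt_length_of_part_ne_zero (by simp only [P] at hPi; omega)
  have hnext : part lam (i + 1) ≤ part mu (i + 1) :=
    not_lt.mp (Nat.findGreatest_is_greatest (P := P) (Nat.lt_succ_self i) hi)
  have hle : part lam (i + 1) ≤ part mu i := hnext.trans (part_antitone hmu (Nat.le_succ i))
  refine ⟨i, hi, part mu i, hPi, le_antisymm ?_ ((lt_conjPart_iff hlam).mpr hPi), rfl⟩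
  exact not_lt.mp fun h => (not_lt.mpr hle) ((lt_conjPart_iff hlam).mp h)

lemma one_sub_zpow_mul_one_ne_zero {q : ℂ} (hroot : ∀ m : ℤ, m ≠ 0 → q ^ m ≠ 1) {m : ℤ}
    (hm : m ≠ 0) : 1 - q ^ m * 1 ≠ 0 := by
  rw [mul_one, sub_ne_zero]
  exact (hroot m hm).symm

lemma nek_self_ne_zero {q : ℂ} (hroot : ∀ m : ℤ, m ≠ 0 → q ^ m ≠ 1) {lam : List ℕ}
    (hlam : lam.Pairwise (· ≥ ·)) : nek q 1 lam lam ≠ 0 := by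
  refine mul_ne_zero ?_ ?_ <;>
  refine prod_ne_zero_iff.mpr fun i _ => prod_ne_zero_iff.mpr fun j hj => ?_ <;>
  · have harm : j < part lam i := mem_range.mp hj
    have hleg : i < conjPart lam j := (lt_conjPart_iff hlam).mpr harm
    exact one_sub_zpow_mul_one_ne_zero hroot (by omega)

lemma nek_eq_zero_of_part_lt {q : ℂ} {lam mu : List ℕ} (hlam : lam.Pairwise (· ≥ ·))
    (hmu : mu.Pairwise (· ≥ ·)) {i₀ : ℕ} (hi₀ : part mu i₀ < part lam i₀) :
    nek q 1 lam mu = 0 := by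
  obtain ⟨i, hi, j, hj, hleg, harm⟩ := exists_cell_conjPart_eq_succ_of_part_lt hlam hmu hi₀
  refine mul_eq_zero_of_left
    (prod_eq_zero (mem_range.mpr hi) (prod_eq_zero (mem_range.mpr hj) ?_)) _
  rw [hleg, harm]
  simp

lemma nek_eq_zero_of_part_gt {q : ℂ} {lam mu : List ℕ} (hlam : lam.Pairwise (· ≥ ·))
    (hmu : mu.Pairwise (· ≥ ·)) {i₀ : ℕ} (hi₀ : part lam i₀ < part mu i₀) :
    nek q 1 lam mu = 0 := by
  obtain ⟨i, hi, j, hj, hleg, harm⟩ := exists_cell_conjPart_eq_succ_of_part_lt hmu hlam hi₀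
  refine mul_eq_zero_of_right _
    (prod_eq_zero (mem_range.mpr hi) (prod_eq_zero (mem_range.mpr hj) ?_))
  rw [hleg, harm]
  simp

theorem stmt4_general (q : ℂ) (hroot : ∀ m : ℤ, m ≠ 0 → q ^ m ≠ 1)
    (lam mu : List ℕ) (hlam : IsPartition lam) (hmu : IsPartition mu) :
    nek q 1 lam mu ≠ 0 ↔ lam = mu := by
  refine ⟨fun hne => eq_of_part_eq hlam hmu fun i => ?_,
    fun h => h ▸ nek_self_ne_zero hroot hlam.1⟩
  rcases lt_trichotomy (part lam i) (part mu i) with hlt | heq | hgt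
  · exact absurd (nek_eq_zero_of_part_gt hlam.1 hmu.1 hlt) hne
  · exact heq
  · exact absurd (nek_eq_zero_of_part_lt hlam.1 hmu.1 hgt) hne

theorem stmt4 (q : ℂ) (hq : q ≠ 0) (hroot : ∀ m : ℤ, m ≠ 0 → q ^ m ≠ 1)
    (lam mu : List ℕ) (hlam : IsPartition lam) (hmu : IsPartition mu) :
    nek q 1 lam mu ≠ 0 ↔ lam = mu :=
  stmt4_general q hroot lam mu hlam hmu
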